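/- Let m be even and let g and h be bent functions in m variables with duals g* and h*. Assume that g+h is also bent and that its dual satisfies (g+h)* = g* + h*. For each b ∈ 𝔽₂^m define f_b(x) = g(b) + h(x+b) + (g+h)(x) and the block B_b = {p ∈ 𝔽₂^m : f_b(p) = 1}. Then: (1) |B_b| = 2^{m−1} − 2^{m/2−1} for every b ∈ 𝔽₂^m; (2) every pair of distinct points p, q ∈ 𝔽₂^m lies in exactly 2^{m−2} − 2^{m/2−1} of the blocks B_b, b ∈ 𝔽₂^m. Hence (𝔽₂^m, {B_b : b ∈ 𝔽₂^m}) is a symmetric 2-(2^m, 2^{m−1}−2^{m/2−1}, 2^{m−2}−2^{m/2−1}) design. -/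
import Mathlib


open Finset

/-- dot product on 𝔽₂^m -/
def dotp {m : ℕ} (a x : Fin m → ZMod 2) : ZMod 2 := ∑ i, a i * x i

/-- (−1)^a for a ∈ 𝔽₂, as an integer -/
def sgn (a : ZMod 2) : ℤ := if a = 0 then 1 else -1

/-- Walsh transform of f on a finite subset P of 𝔽₂^m -/
def walsh {m : ℕ} (P : Finset (Fin m → ZMod 2)) (f : (Fin m → ZMod 2) → ZMod 2)
    (u : Fin m → ZMod 2) : ℤ :=
  ∑ x ∈ P, sgn (f x + dotp u x)

/-- Walsh transform of f on all of 𝔽₂^m -/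
def walshF {m : ℕ} (f : (Fin m → ZMod 2) → ZMod 2) (u : Fin m → ZMod 2) : ℤ :=
  walsh Finset.univ f u



lemma sgn_add : ∀ a b : ZMod 2, sgn (a + b) = sgn a * sgn b := by decide
lemma sgn_mul_self : ∀ a : ZMod 2, sgn a * sgn a = 1 := by decide
lemma sgn_add_one : ∀ a : ZMod 2, sgn a + sgn (a + 1) = 0 := by decide

lemma pi_add_self {m : ℕ} (x : Fin m → ZMod 2) : x + x = 0 := by
  funext i; exact CharTwo.add_self_eq_zero _

lemma dotp_add_right {m : ℕ} (u x y : Fin m → ZMod 2) :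
    dotp u (x + y) = dotp u x + dotp u y := by
  simp [dotp, mul_add, Finset.sum_add_distrib]

lemma card_univ_F (m : ℕ) : ((Finset.univ : Finset (Fin m → ZMod 2)).card) = 2 ^ m := by
  simp [Finset.card_univ]

lemma orth_ne {m : ℕ} (v : Fin m → ZMod 2) (hv : v ≠ 0) :
    ∑ u : Fin m → ZMod 2, sgn (dotp u v) = 0 := by
  obtain ⟨i, hi⟩ : ∃ i, v i ≠ 0 := by
    by_contra hc; push_neg at hc; exact hv (funext hc)
  have hvi : v i = 1 := by
    have : ∀ a : ZMod 2, a ≠ 0 → a = 1 := by decide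
    exact this _ hi
  have key : ∀ u : Fin m → ZMod 2,
      dotp (Function.update u i (u i + 1)) v = dotp u v + 1 := by
    intro u
    have h1 : ∀ j, Function.update u i (u i + 1) j * v j
        = Function.update (fun j => u j * v j) i ((u i + 1) * v i) j := by
      intro j
      rcases eq_or_ne j i with rfl | hj
      · simp
      · simp [Function.update_of_ne hj]
    have h2 : dotp u v = u i * v i + ∑ j ∈ Finset.univ.erase i, u j * v j := by
      rw [dotp, ← Finset.add_sum_erase _ _ (Finset.mem_univ i)]
    rw [dotp, Finset.sum_congr rfl (fun j _ => h1 j),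
      Finset.sum_update_of_mem (Finset.mem_univ i), h2, hvi]
    have : Finset.univ \ {i} = Finset.univ.erase i := by
      rw [Finset.sdiff_singleton_eq_erase]
    rw [this]; ring
  refine Finset.sum_ninvolution (fun u => Function.update u i (u i + 1)) ?_ ?_ ?_ ?_
  · intro u; rw [key u]; exact sgn_add_one _
  · intro u _
    intro hcon
    have := congrFun hcon i
    simp at this
  · intro u; exact Finset.mem_univ _
  · intro u
    funext j
    rcases eq_or_ne j i with rfl | hj
    · simp [add_assoc, show (1:ZMod 2)+1 = 0 from by decide]
    · simp [Function.update_of_ne hj]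

lemma orth {m : ℕ} (v : Fin m → ZMod 2) :
    ∑ u : Fin m → ZMod 2, sgn (dotp u v) = if v = 0 then (2:ℤ) ^ m else 0 := by
  rcases eq_or_ne v 0 with rfl | hv
  · simp only [if_pos rfl]
    have : ∀ u : Fin m → ZMod 2, dotp u 0 = 0 := by intro u; simp [dotp]
    simp only [this, sgn, if_pos rfl, Finset.sum_const, card_univ_F, nsmul_eq_mul, mul_one]
    push_cast; ring
  · rw [if_neg hv]; exact orth_ne v hv

lemma pi_add_eq_zero_iff {m : ℕ} (x y : Fin m → ZMod 2) : x + y = 0 ↔ x = y := by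
  constructor
  · intro hxy
    calc x = x + (y + y) := by rw [pi_add_self, add_zero]
    _ = (x + y) + y := by rw [add_assoc]
    _ = y := by rw [hxy, zero_add]
  · rintro rfl; exact pi_add_self x

lemma conv {m : ℕ} (f1 f2 : (Fin m → ZMod 2) → ZMod 2) (t : Fin m → ZMod 2) :
    ∑ u : Fin m → ZMod 2, walshF f1 u * walshF f2 u * sgn (dotp u t)
      = 2 ^ m * ∑ y : Fin m → ZMod 2, sgn (f1 (y + t) + f2 y) := by
  calc ∑ u : Fin m → ZMod 2, walshF f1 u * walshF f2 u * sgn (dotp u t)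
      = ∑ u : Fin m → ZMod 2, ∑ x : Fin m → ZMod 2, ∑ y : Fin m → ZMod 2,
          sgn (f1 x) * sgn (f2 y) * sgn (dotp u (x + y + t)) := by
        refine Finset.sum_congr rfl fun u _ => ?_
        rw [walshF, walshF, walsh, walsh, Finset.sum_mul, Finset.sum_mul]
        refine Finset.sum_congr rfl fun x _ => ?_
        rw [Finset.mul_sum, Finset.sum_mul]
        refine Finset.sum_congr rfl fun y _ => ?_
        rw [dotp_add_right, dotp_add_right, sgn_add (f1 x), sgn_add (f2 y),
          sgn_add (dotp u x + dotp u y), sgn_add (dotp u x)]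
        ring
    _ = ∑ x : Fin m → ZMod 2, ∑ y : Fin m → ZMod 2,
          sgn (f1 x) * sgn (f2 y) * (if x + y + t = 0 then (2:ℤ)^m else 0) := by
        rw [Finset.sum_comm]
        refine Finset.sum_congr rfl fun x _ => ?_
        rw [Finset.sum_comm]
        refine Finset.sum_congr rfl fun y _ => ?_
        rw [← Finset.mul_sum, orth]
    _ = ∑ y : Fin m → ZMod 2, ∑ x : Fin m → ZMod 2,
          (if x = y + t then sgn (f1 x) * sgn (f2 y) * (2:ℤ)^m else 0) := by
        rw [Finset.sum_comm]
        refine Finset.sum_congr rfl fun y _ => Finset.sum_congr rfl fun x _ => ?_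
        rw [add_assoc]
        simp only [pi_add_eq_zero_iff]
        split <;> simp
    _ = ∑ y : Fin m → ZMod 2, sgn (f1 (y + t)) * sgn (f2 y) * (2:ℤ)^m := by
        refine Finset.sum_congr rfl fun y _ => ?_
        rw [Finset.sum_ite_eq' Finset.univ (y + t)
          (fun x => sgn (f1 x) * sgn (f2 y) * (2:ℤ)^m), if_pos (Finset.mem_univ _)]
    _ = 2 ^ m * ∑ y : Fin m → ZMod 2, sgn (f1 (y + t) + f2 y) := by
        rw [Finset.mul_sum]
        refine Finset.sum_congr rfl fun y _ => ?_
        rw [sgn_add]; ring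

lemma walsh_inv {m : ℕ} (f : (Fin m → ZMod 2) → ZMod 2) (b : Fin m → ZMod 2) :
    ∑ u : Fin m → ZMod 2, walshF f u * sgn (dotp u b) = 2 ^ m * sgn (f b) := by
  calc ∑ u : Fin m → ZMod 2, walshF f u * sgn (dotp u b)
      = ∑ u : Fin m → ZMod 2, ∑ x : Fin m → ZMod 2,
          sgn (f x) * sgn (dotp u (x + b)) := by
        refine Finset.sum_congr rfl fun u _ => ?_
        rw [walshF, walsh, Finset.sum_mul]
        refine Finset.sum_congr rfl fun x _ => ?_
        rw [dotp_add_right, sgn_add (f x), sgn_add (dotp u x)]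
        ring
    _ = ∑ x : Fin m → ZMod 2, sgn (f x) * (if x + b = 0 then (2:ℤ)^m else 0) := by
        rw [Finset.sum_comm]
        refine Finset.sum_congr rfl fun x _ => ?_
        rw [← Finset.mul_sum, orth]
    _ = 2 ^ m * sgn (f b) := by
        have : ∀ x : Fin m → ZMod 2,
            sgn (f x) * (if x + b = 0 then (2:ℤ)^m else 0)
            = if x = b then sgn (f x) * (2:ℤ)^m else 0 := by
          intro x
          simp only [pi_add_eq_zero_iff]
          split <;> simp
        rw [Finset.sum_congr rfl fun x _ => this x,
          Finset.sum_ite_eq' Finset.univ b (fun x => sgn (f x) * (2:ℤ)^m),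
          if_pos (Finset.mem_univ _)]
        ring


lemma dotp_comm {m : ℕ} (a x : Fin m → ZMod 2) : dotp a x = dotp x a := by
  simp [dotp, mul_comm]

lemma dual_walsh {m : ℕ} (hm2 : m / 2 + m / 2 = m)
    (g gstar : (Fin m → ZMod 2) → ZMod 2)
    (hdg : ∀ a, walshF g a = sgn (gstar a) * 2 ^ (m / 2)) (b : Fin m → ZMod 2) :
    walshF gstar b = 2 ^ (m / 2) * sgn (g b) := by
  have hpow : (2:ℤ) ^ m = 2 ^ (m/2) * 2 ^ (m/2) := by rw [← pow_add, hm2]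
  have h1 := walsh_inv g b
  have h2 : ∑ u : Fin m → ZMod 2, walshF g u * sgn (dotp u b)
      = 2 ^ (m/2) * walshF gstar b := by
    conv_rhs => rw [walshF, walsh]
    rw [Finset.mul_sum]
    refine Finset.sum_congr rfl fun u _ => ?_
    rw [hdg u, sgn_add, dotp_comm b u]; ring
  have h3 : (2:ℤ) ^ (m/2) * walshF gstar b = 2 ^ (m/2) * (2 ^ (m/2) * sgn (g b)) := by
    rw [← h2, h1, hpow]; ring
  exact mul_left_cancel₀ (pow_ne_zero _ two_ne_zero) h3

lemma sumA {m : ℕ} (hm2 : m / 2 + m / 2 = m)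
    (g h gstar hstar : (Fin m → ZMod 2) → ZMod 2)
    (hdg : ∀ a, walshF g a = sgn (gstar a) * 2 ^ (m / 2))
    (hdh : ∀ a, walshF h a = sgn (hstar a) * 2 ^ (m / 2))
    (hdgh : ∀ a, walshF (fun x => g x + h x) a = sgn (gstar a + hstar a) * 2 ^ (m / 2))
    (b : Fin m → ZMod 2) :
    ∑ p : Fin m → ZMod 2, sgn (g b + h (p + b) + (g p + h p)) = 2 ^ (m / 2) := by
  have hpow : (2:ℤ) ^ m = 2 ^ (m/2) * 2 ^ (m/2) := by rw [← pow_add, hm2]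
  have hc := conv h (fun x => g x + h x) b
  have l1 : ∑ u : Fin m → ZMod 2,
      walshF h u * walshF (fun x => g x + h x) u * sgn (dotp u b)
      = 2 ^ m * walshF gstar b := by
    conv_rhs => rw [walshF, walsh]
    rw [Finset.mul_sum]
    refine Finset.sum_congr rfl fun u _ => ?_
    rw [hdh u, hdgh u, dotp_comm b u, sgn_add (gstar u) (hstar u),
      sgn_add (gstar u) (dotp u b), hpow]
    have hs := sgn_mul_self (hstar u)
    linear_combination (2:ℤ)^(m/2) * 2^(m/2) * sgn (gstar u) * sgn (dotp u b) * hs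
  have l2 : walshF gstar b = 2 ^ (m/2) * sgn (g b) := dual_walsh hm2 g gstar hdg b
  have l3 : ∑ p : Fin m → ZMod 2, sgn (h (p + b) + (g p + h p))
      = 2 ^ (m/2) * sgn (g b) := by
    rw [l1, l2] at hc
    exact (mul_left_cancel₀ (pow_ne_zero m (two_ne_zero (α := ℤ))) hc).symm
  calc ∑ p : Fin m → ZMod 2, sgn (g b + h (p + b) + (g p + h p))
      = ∑ p : Fin m → ZMod 2, sgn (g b) * sgn (h (p + b) + (g p + h p)) := by
        refine Finset.sum_congr rfl fun p _ => ?_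
        rw [add_assoc, sgn_add]
    _ = sgn (g b) * (2 ^ (m/2) * sgn (g b)) := by rw [← Finset.mul_sum, l3]
    _ = 2 ^ (m/2) * (sgn (g b) * sgn (g b)) := by ring
    _ = 2 ^ (m/2) := by rw [sgn_mul_self, mul_one]

lemma sumB {m : ℕ} (hm2 : m / 2 + m / 2 = m)
    (g h gstar hstar : (Fin m → ZMod 2) → ZMod 2)
    (hdg : ∀ a, walshF g a = sgn (gstar a) * 2 ^ (m / 2))
    (hdh : ∀ a, walshF h a = sgn (hstar a) * 2 ^ (m / 2))
    (hdgh : ∀ a, walshF (fun x => g x + h x) a = sgn (gstar a + hstar a) * 2 ^ (m / 2))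
    (p : Fin m → ZMod 2) :
    ∑ b : Fin m → ZMod 2, sgn (g b + h (p + b) + (g p + h p)) = 2 ^ (m / 2) := by
  have hpow : (2:ℤ) ^ m = 2 ^ (m/2) * 2 ^ (m/2) := by rw [← pow_add, hm2]
  have hc := conv h g p
  have l1 : ∑ u : Fin m → ZMod 2, walshF h u * walshF g u * sgn (dotp u p)
      = 2 ^ m * walshF (fun x => gstar x + hstar x) p := by
    conv_rhs => rw [walshF, walsh]
    rw [Finset.mul_sum]
    refine Finset.sum_congr rfl fun u _ => ?_
    rw [hdh u, hdg u, hpow, dotp_comm p u, sgn_add (gstar u + hstar u) (dotp u p),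
      sgn_add (gstar u) (hstar u)]
    ring
  have l2 : walshF (fun x => gstar x + hstar x) p = 2 ^ (m/2) * sgn (g p + h p) :=
    dual_walsh hm2 (fun x => g x + h x) (fun x => gstar x + hstar x) hdgh p
  have l3 : ∑ b : Fin m → ZMod 2, sgn (h (b + p) + g b)
      = 2 ^ (m/2) * sgn (g p + h p) := by
    rw [l1, l2] at hc
    exact (mul_left_cancel₀ (pow_ne_zero m (two_ne_zero (α := ℤ))) hc).symm
  calc ∑ b : Fin m → ZMod 2, sgn (g b + h (p + b) + (g p + h p))
      = ∑ b : Fin m → ZMod 2, sgn (h (b + p) + g b) * sgn (g p + h p) := by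
        refine Finset.sum_congr rfl fun b _ => ?_
        have e1 : h (b + p) = h (p + b) := by rw [add_comm]
        rw [e1, sgn_add (g b + h (p + b)) (g p + h p), sgn_add (g b) (h (p + b)),
          sgn_add (h (p + b)) (g b)]
        ring
    _ = (2 ^ (m/2) * sgn (g p + h p)) * sgn (g p + h p) := by rw [← Finset.sum_mul, l3]
    _ = 2 ^ (m/2) := by
        have hs := sgn_mul_self (g p + h p)
        linear_combination (2:ℤ)^(m/2) * hs

lemma sumC {m : ℕ} (hm2 : m / 2 + m / 2 = m)
    (h hstar : (Fin m → ZMod 2) → ZMod 2)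
    (hdh : ∀ a, walshF h a = sgn (hstar a) * 2 ^ (m / 2))
    (p q : Fin m → ZMod 2) (hpq : p ≠ q) :
    ∑ b : Fin m → ZMod 2, sgn (h (p + b) + h (q + b)) = 0 := by
  have hpow : (2:ℤ) ^ m = 2 ^ (m/2) * 2 ^ (m/2) := by rw [← pow_add, hm2]
  have ht : p + q ≠ 0 := fun hc => hpq ((pi_add_eq_zero_iff p q).mp hc)
  have hc := conv h h (p + q)
  have l1 : ∑ u : Fin m → ZMod 2, walshF h u * walshF h u * sgn (dotp u (p + q)) = 0 := by
    have e : ∀ u : Fin m → ZMod 2, walshF h u * walshF h u * sgn (dotp u (p + q))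
        = 2 ^ m * sgn (dotp u (p + q)) := by
      intro u
      rw [hdh u, hpow]
      have hs := sgn_mul_self (hstar u)
      linear_combination (2:ℤ)^(m/2) * 2^(m/2) * sgn (dotp u (p + q)) * hs
    rw [Finset.sum_congr rfl fun u _ => e u, ← Finset.mul_sum, orth_ne _ ht, mul_zero]
  have l2 : ∑ y : Fin m → ZMod 2, sgn (h (y + (p + q)) + h y) = 0 := by
    rw [l1] at hc
    rcases mul_eq_zero.mp hc.symm with h0 | h0
    · exact absurd h0 (pow_ne_zero m (two_ne_zero (α := ℤ)))
    · exact h0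
  calc ∑ b : Fin m → ZMod 2, sgn (h (p + b) + h (q + b))
      = ∑ y : Fin m → ZMod 2, sgn (h (y + (p + q)) + h y) := by
        refine (Fintype.sum_equiv (Equiv.addLeft q)
          (fun y => sgn (h (y + (p + q)) + h y))
          (fun b => sgn (h (p + b) + h (q + b))) fun y => ?_).symm
        simp only [Equiv.coe_addLeft]
        have e1 : p + (q + y) = y + (p + q) := by ring
        have e2 : q + (q + y) = y := by rw [← add_assoc, pi_add_self, zero_add]
        rw [e1, e2]
    _ = 0 := l2

lemma card_half {m : ℕ} (f : (Fin m → ZMod 2) → ZMod 2) :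
    2 * ((Finset.univ.filter (fun p => f p = 1)).card : ℤ)
      = 2 ^ m - ∑ p : Fin m → ZMod 2, sgn (f p) := by
  have h1 : ∀ a : ZMod 2, sgn a = 1 - 2 * (if a = 1 then (1:ℤ) else 0) := by decide
  rw [Finset.sum_congr rfl fun p _ => h1 (f p), Finset.sum_sub_distrib,
    Finset.sum_const, ← Finset.mul_sum, Finset.sum_boole, card_univ_F]
  push_cast
  ring

lemma card_quarter {m : ℕ} (f1 f2 : (Fin m → ZMod 2) → ZMod 2) :
    4 * ((Finset.univ.filter (fun b => f1 b = 1 ∧ f2 b = 1)).card : ℤ)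
      = ∑ b : Fin m → ZMod 2, (1 - sgn (f1 b)) * (1 - sgn (f2 b)) := by
  have h1 : ∀ a c : ZMod 2, (1 - sgn a) * (1 - sgn c)
      = 4 * (if a = 1 ∧ c = 1 then (1:ℤ) else 0) := by decide
  rw [Finset.sum_congr rfl fun b _ => h1 (f1 b) (f2 b), ← Finset.mul_sum, Finset.sum_boole]

/-- The block B_b = {p ∈ 𝔽₂^m : g(b) + h(p+b) + (g+h)(p) = 1}. -/
def ghBlock {m : ℕ} (g h : (Fin m → ZMod 2) → ZMod 2) (b : Fin m → ZMod 2) :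
    Finset (Fin m → ZMod 2) :=
  Finset.univ.filter (fun p => g b + h (p + b) + (g p + h p) = 1)

theorem stmt_19 (m : ℕ) (hm : Even m) (g h gstar hstar : (Fin m → ZMod 2) → ZMod 2)
    (hdg : ∀ a, walshF g a = sgn (gstar a) * 2 ^ (m / 2))
    (hdh : ∀ a, walshF h a = sgn (hstar a) * 2 ^ (m / 2))
    -- g + h is bent with dual (g+h)* = g* + h*
    (hdgh : ∀ a, walshF (fun x => g x + h x) a = sgn (gstar a + hstar a) * 2 ^ (m / 2)) :
    (∀ b : Fin m → ZMod 2,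
      ((ghBlock g h b).card : ℤ) = 2 ^ (m - 1) - 2 ^ (m / 2 - 1)) ∧
    (∀ p q : Fin m → ZMod 2, p ≠ q →
      ((Finset.univ.filter (fun b => p ∈ ghBlock g h b ∧ q ∈ ghBlock g h b)).card : ℤ)
        = 2 ^ (m - 2) - 2 ^ (m / 2 - 1)) := by
  obtain ⟨k, hk⟩ := hm
  have hm2 : m / 2 + m / 2 = m := by omega
  constructor
  · intro b
    rcases Nat.eq_zero_or_pos m with hm0 | hmpos
    · subst hm0
      have hempty : ghBlock g h b = ∅ := by
        rw [ghBlock, Finset.filter_eq_empty_iff]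
        intro p _
        have hpb : p = b := funext fun i => i.elim0
        have hbb : b + b = b := funext fun i => i.elim0
        rw [hpb, hbb]
        have : ∀ x y : ZMod 2, x + y + (x + y) ≠ 1 := by decide
        exact this (g b) (h b)
      rw [hempty]
      norm_num
    · have hA := sumA hm2 g h gstar hstar hdg hdh hdgh b
      have hcard := card_half (fun p => g b + h (p + b) + (g p + h p))
      rw [hA] at hcard
      have e1 : (2:ℤ) ^ m = 2 * 2 ^ (m - 1) := by
        rw [← pow_succ']; congr 1; omega
      have e2 : (2:ℤ) ^ (m / 2) = 2 * 2 ^ (m / 2 - 1) := by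
        rw [← pow_succ']; congr 1; omega
      have : ghBlock g h b
          = Finset.univ.filter (fun p => g b + h (p + b) + (g p + h p) = 1) := rfl
      rw [this]
      linarith [hcard, e1, e2]
  · intro p q hpq
    have hm1 : 0 < m := by
      rcases Nat.eq_zero_or_pos m with hm0 | hmpos
      · exfalso; subst hm0; exact hpq (funext fun i => i.elim0)
      · exact hmpos
    have hm2' : 2 ≤ m := by omega
    have hfilter : (Finset.univ.filter (fun b => p ∈ ghBlock g h b ∧ q ∈ ghBlock g h b))
        = Finset.univ.filter (fun b =>
            (g b + h (p + b) + (g p + h p) = 1) ∧ (g b + h (q + b) + (g q + h q) = 1)) := by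
      apply Finset.filter_congr
      intro b _
      simp [ghBlock]
    rw [hfilter]
    have hq4 := card_quarter (fun b => g b + h (p + b) + (g p + h p))
      (fun b => g b + h (q + b) + (g q + h q))
    have hSp := sumB hm2 g h gstar hstar hdg hdh hdgh p
    have hSq := sumB hm2 g h gstar hstar hdg hdh hdgh q
    have hC := sumC hm2 h hstar hdh p q hpq
    have hcross : ∑ b : Fin m → ZMod 2,
        sgn (g b + h (p + b) + (g p + h p)) * sgn (g b + h (q + b) + (g q + h q))
        = 0 := by
      have hpt : ∀ b : Fin m → ZMod 2,
          sgn (g b + h (p + b) + (g p + h p)) * sgn (g b + h (q + b) + (g q + h q))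
          = sgn ((g p + h p) + (g q + h q)) * sgn (h (p + b) + h (q + b)) := by
        intro b
        rw [← sgn_add, ← sgn_add]
        congr 1
        have : ∀ a x y c d e f' : ZMod 2,
            a + x + (c + d) + (a + y + (e + f')) = c + d + (e + f') + (x + y) := by decide
        exact this (g b) (h (p + b)) (h (q + b)) (g p) (h p) (g q) (h q)
      rw [Finset.sum_congr rfl fun b _ => hpt b, ← Finset.mul_sum, hC, mul_zero]
    have hsum : ∑ b : Fin m → ZMod 2,
        (1 - sgn (g b + h (p + b) + (g p + h p))) * (1 - sgn (g b + h (q + b) + (g q + h q)))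
        = 2 ^ m - 2 ^ (m / 2) - 2 ^ (m / 2) := by
      have expand : ∀ b : Fin m → ZMod 2,
          (1 - sgn (g b + h (p + b) + (g p + h p))) * (1 - sgn (g b + h (q + b) + (g q + h q)))
          = 1 - sgn (g b + h (p + b) + (g p + h p)) - sgn (g b + h (q + b) + (g q + h q))
            + sgn (g b + h (p + b) + (g p + h p)) * sgn (g b + h (q + b) + (g q + h q)) :=
        fun b => by ring
      rw [Finset.sum_congr rfl fun b _ => expand b, Finset.sum_add_distrib,
        Finset.sum_sub_distrib, Finset.sum_sub_distrib, Finset.sum_const, card_univ_F,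
        hSp, hSq, hcross]
      push_cast
      ring
    rw [hsum] at hq4
    have e1 : (2:ℤ) ^ m = 4 * 2 ^ (m - 2) := by
      rw [show (4:ℤ) = 2 ^ 2 by norm_num, ← pow_add]; congr 1; omega
    have e2 : (2:ℤ) ^ (m / 2) = 2 * 2 ^ (m / 2 - 1) := by
      rw [← pow_succ']; congr 1; omega
    linarith [hq4, e1, e2]
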